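/- Let Γ be a lattice in H₃(ℝ) and let A ∈ GL₂(ℝ) be a matrix with p(Γ) = Aℤ². Then the commutator subgroup [Γ,Γ] equals {c(m·|det A|) : m ∈ ℤ}; consequently |det A|/ξ_Γ is a positive integer and k_Γ = |det A|/ξ_Γ. -/

import Mathlib

open MeasureTheory

/-- The real Heisenberg group `H₃(ℝ)`: `ℝ³` with
`(a,b,c)·(a′,b′,c′) = (a+a′, b+b′, c+c′+a·b′)`. -/
@[ext] structure H3 : Type where
  x : ℝ
  y : ℝ
  z : ℝ

namespace H3

instance : Mul H3 := ⟨fun g h => ⟨g.x + h.x, g.y + h.y, g.z + h.z + g.x * h.y⟩⟩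
instance : One H3 := ⟨⟨0, 0, 0⟩⟩
instance : Inv H3 := ⟨fun g => ⟨-g.x, -g.y, -g.z + g.x * g.y⟩⟩

@[simp] lemma mul_x (g h : H3) : (g * h).x = g.x + h.x := rfl
@[simp] lemma mul_y (g h : H3) : (g * h).y = g.y + h.y := rfl
@[simp] lemma mul_z (g h : H3) : (g * h).z = g.z + h.z + g.x * h.y := rfl
@[simp] lemma one_x : (1 : H3).x = 0 := rfl
@[simp] lemma one_y : (1 : H3).y = 0 := rfl
@[simp] lemma one_z : (1 : H3).z = 0 := rfl
@[simp] lemma inv_x (g : H3) : g⁻¹.x = -g.x := rfl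
@[simp] lemma inv_y (g : H3) : g⁻¹.y = -g.y := rfl
@[simp] lemma inv_z (g : H3) : g⁻¹.z = -g.z + g.x * g.y := rfl

instance : Group H3 where
  mul_assoc a b c := by ext <;> simp <;> ring
  one_mul a := by ext <;> simp
  mul_one a := by ext <;> simp
  inv_mul_cancel a := by ext <;> simp

/-- The Euclidean topology on `H₃(ℝ)`. -/
instance : TopologicalSpace H3 :=
  TopologicalSpace.induced (fun g => (g.x, g.y, g.z)) inferInstance

instance : MeasurableSpace H3 := borel H3

/-- `a(t)`. -/
def Ha (t : ℝ) : H3 := ⟨t, 0, 0⟩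
/-- `b(t)`. -/
def Hb (t : ℝ) : H3 := ⟨0, t, 0⟩
/-- `c(t)`, the center. -/
def Hc (t : ℝ) : H3 := ⟨0, 0, t⟩

/-- The projection `p : H₃(ℝ) → ℝ²`. -/
def pmap (g : H3) : ℝ × ℝ := (g.x, g.y)

/-- The kernel of `p`, i.e. the center of `H₃(ℝ)`, as a subgroup. -/
def pKer : Subgroup H3 where
  carrier := {g | g.x = 0 ∧ g.y = 0}
  one_mem' := ⟨rfl, rfl⟩
  mul_mem' := by
    rintro a b ⟨ha1, ha2⟩ ⟨hb1, hb2⟩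
    exact ⟨by simp [ha1, hb1], by simp [ha2, hb2]⟩
  inv_mem' := by
    rintro a ⟨ha1, ha2⟩
    exact ⟨by simp [ha1], by simp [ha2]⟩

/-- A lattice in `H₃(ℝ)`: a discrete subgroup with compact quotient. -/
def IsLattice (Γ : Subgroup H3) : Prop :=
  DiscreteTopology Γ ∧ CompactSpace (H3 ⧸ Γ)

/-- `k_Γ`: the index of the commutator subgroup `[Γ,Γ]` in `Γ ∩ ker p`. -/
noncomputable def kIdx (Γ : Subgroup H3) : ℕ :=
  Subgroup.relIndex ⁅Γ, Γ⁆ (Γ ⊓ pKer)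

/-- The integer lattice `ℤ² ⊆ ℝ²`. -/
def intLattice : Set (ℝ × ℝ) := {v | ∃ m n : ℤ, v = ((m : ℝ), (n : ℝ))}

/-- The action of a `2×2` matrix on `ℝ²`. -/
def matVec (A : Matrix (Fin 2) (Fin 2) ℝ) (v : ℝ × ℝ) : ℝ × ℝ :=
  (A 0 0 * v.1 + A 0 1 * v.2, A 1 0 * v.1 + A 1 1 * v.2)

/-- The dual of a subset of `ℝ²`:
all vectors pairing integrally with every element of `S`. -/
def dualSet (S : Set (ℝ × ℝ)) : Set (ℝ × ℝ) :=
  {v | ∀ w ∈ S, ∃ n : ℤ, v.1 * w.1 + v.2 * w.2 = (n : ℝ)}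

end H3

open H3

open scoped commutatorElement

section AuxLemmas

lemma Hc_mul' (s t : ℝ) : Hc s * Hc t = Hc (s + t) := by ext <;> simp [Hc]
lemma Hc_inv' (t : ℝ) : (Hc t)⁻¹ = Hc (-t) := by ext <;> simp [Hc]

lemma Hc_pow' (t : ℝ) (n : ℕ) : Hc t ^ n = Hc (n * t) := by
  induction n with
  | zero => ext <;> simp [Hc]
  | succ n ih => rw [pow_succ, ih, Hc_mul']; exact congrArg Hc (by push_cast; ring)

lemma Hc_zpow' (t : ℝ) (n : ℤ) : Hc t ^ n = Hc (n * t) := by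
  cases n with
  | ofNat n => rw [Int.ofNat_eq_coe, zpow_natCast, Hc_pow']; norm_num
  | negSucc n =>
    rw [zpow_negSucc, Hc_pow', Hc_inv']
    exact congrArg Hc (by push_cast; ring)

lemma comm_eq' (g h : H3) : ⁅g, h⁆ = Hc (g.x * h.y - g.y * h.x) := by
  ext <;> simp [commutatorElement_def, Hc] <;> ring

end AuxLemmas

/-- For a lattice `Γ` in `H₃(ℝ)` with `p(Γ) = Aℤ²`, the commutator subgroup `[Γ,Γ]`
equals `{c(m·|det A|) : m ∈ ℤ}`; consequently `|det A|/ξ_Γ` is a positive integer and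
`k_Γ = |det A|/ξ_Γ`. -/
theorem commutator_eq_and_kIdx
    (Γ : Subgroup H3) (hΓ : IsLattice Γ)
    (A : Matrix (Fin 2) (Fin 2) ℝ) (hAdet : A.det ≠ 0)
    (hA : pmap '' (Γ : Set H3) = matVec A '' intLattice)
    (ξ : ℝ) (hξpos : 0 < ξ)
    (hξ : ∀ t, Hc t ∈ Γ ↔ ∃ m : ℤ, t = (m : ℝ) * ξ) :
    ((⁅Γ, Γ⁆ : Subgroup H3) : Set H3) = {g : H3 | ∃ m : ℤ, g = Hc ((m : ℝ) * |A.det|)} ∧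
    (∃ k : ℕ, 0 < k ∧ (k : ℝ) = |A.det| / ξ) ∧
    (kIdx Γ : ℝ) = |A.det| / ξ := by
  set D := A.det with hDdef
  have hdetfin : D = A 0 0 * A 1 1 - A 0 1 * A 1 0 := Matrix.det_fin_two A
  -- projections of elements of Γ
  have pm : ∀ g ∈ Γ, ∃ m n : ℤ,
      g.x = A 0 0 * m + A 0 1 * n ∧ g.y = A 1 0 * m + A 1 1 * n := by
    intro g hg
    have h1 : pmap g ∈ matVec A '' intLattice := hA ▸ ⟨g, hg, rfl⟩
    obtain ⟨v, ⟨m, n, rfl⟩, hv⟩ := h1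
    refine ⟨m, n, ?_, ?_⟩
    · have := congrArg Prod.fst hv; simpa [matVec, pmap] using this.symm
    · have := congrArg Prod.snd hv; simpa [matVec, pmap] using this.symm
  have key : ∀ g ∈ Γ, ∀ h ∈ Γ, ∃ k : ℤ, ⁅g, h⁆ = Hc (k * D) := by
    intro g hg h hh
    obtain ⟨m, n, hx, hy⟩ := pm g hg
    obtain ⟨m', n', hx', hy'⟩ := pm h hh
    refine ⟨m * n' - n * m', ?_⟩
    rw [comm_eq']
    exact congrArg Hc (by rw [hx, hy, hx', hy', hdetfin]; push_cast; ring)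
  -- elements projecting to the columns of A
  have hcol : ∀ m n : ℤ, ∃ γ ∈ Γ,
      γ.x = A 0 0 * m + A 0 1 * n ∧ γ.y = A 1 0 * m + A 1 1 * n := by
    intro m n
    have h1 : matVec A ((m : ℝ), (n : ℝ)) ∈ pmap '' (Γ : Set H3) := by
      rw [hA]; exact ⟨((m : ℝ), (n : ℝ)), ⟨m, n, rfl⟩, rfl⟩
    obtain ⟨γ, hγ, hp⟩ := h1
    refine ⟨γ, hγ, ?_, ?_⟩
    · have := congrArg Prod.fst hp; simpa [matVec, pmap] using this
    · have := congrArg Prod.snd hp; simpa [matVec, pmap] using this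
  obtain ⟨γ1, hγ1, hγ1x, hγ1y⟩ := hcol 1 0
  obtain ⟨γ2, hγ2, hγ2x, hγ2y⟩ := hcol 0 1
  have hcomm12 : ⁅γ1, γ2⁆ = Hc D := by
    rw [comm_eq']
    exact congrArg Hc (by rw [hγ1x, hγ1y, hγ2x, hγ2y, hdetfin]; push_cast; ring)
  -- the commutator subgroup
  have hsub : (⁅Γ, Γ⁆ : Subgroup H3) = Subgroup.zpowers (Hc D) := by
    apply le_antisymm
    · rw [Subgroup.commutator_le]
      intro g hg h hh
      obtain ⟨k, hk⟩ := key g hg h hh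
      exact Subgroup.mem_zpowers_iff.mpr ⟨k, by rw [Hc_zpow', ← hk]⟩
    · rw [Subgroup.zpowers_le]
      exact hcomm12 ▸ Subgroup.commutator_mem_commutator hγ1 hγ2
  have habs : ∀ t : ℝ, (∃ m : ℤ, t = m * D) ↔ (∃ m : ℤ, t = m * |D|) := by
    intro t
    rcases abs_cases D with ⟨h1, _⟩ | ⟨h1, _⟩
    · rw [h1]
    · rw [h1]
      constructor
      · rintro ⟨m, rfl⟩; exact ⟨-m, by push_cast; ring⟩
      · rintro ⟨m, rfl⟩; exact ⟨-m, by push_cast; ring⟩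
  have goal1 : ((⁅Γ, Γ⁆ : Subgroup H3) : Set H3)
      = {g : H3 | ∃ m : ℤ, g = Hc ((m : ℝ) * |D|)} := by
    rw [hsub]
    ext g
    simp only [SetLike.mem_coe, Subgroup.mem_zpowers_iff, Set.mem_setOf_eq]
    constructor
    · rintro ⟨k, rfl⟩
      obtain ⟨m, hm⟩ := (habs ((k : ℝ) * D)).mp ⟨k, rfl⟩
      exact ⟨m, by rw [Hc_zpow', hm]⟩
    · rintro ⟨m, rfl⟩
      obtain ⟨k, hk⟩ := (habs ((m : ℝ) * |D|)).mpr ⟨m, rfl⟩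
      exact ⟨k, by rw [Hc_zpow', ← hk]⟩
  -- Hc D ∈ Γ, hence D = m₀ ξ
  have hcm : Hc D ∈ Γ := by
    rw [← hcomm12]
    exact Γ.mul_mem (Γ.mul_mem (Γ.mul_mem hγ1 hγ2) (Γ.inv_mem hγ1)) (Γ.inv_mem hγ2)
  obtain ⟨m₀, hm₀⟩ := (hξ D).mp hcm
  have hm₀ne : m₀ ≠ 0 := by
    rintro rfl; simp at hm₀; exact hAdet (hDdef ▸ hm₀)
  have habsD : |D| = (m₀.natAbs : ℝ) * ξ := by
    rw [hm₀, abs_mul, abs_of_pos hξpos, Nat.cast_natAbs, Int.cast_abs]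
  have hdiv : ((m₀.natAbs : ℝ)) = |D| / ξ := by
    rw [habsD, mul_div_assoc, div_self hξpos.ne', mul_one]
  refine ⟨goal1, ⟨m₀.natAbs, Nat.pos_of_ne_zero (by simpa using hm₀ne), hdiv⟩, ?_⟩
  -- the index computation
  have hker : Γ ⊓ pKer = Subgroup.zpowers (Hc ξ) := by
    ext g
    simp only [Subgroup.mem_inf, Subgroup.mem_zpowers_iff]
    constructor
    · rintro ⟨hgΓ, hx, hy⟩
      have hg' : g = Hc g.z := by ext <;> simp [Hc, hx, hy]
      obtain ⟨m, hm⟩ := (hξ g.z).mp (hg' ▸ hgΓ)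
      exact ⟨m, by rw [Hc_zpow', ← hm, ← hg']⟩
    · rintro ⟨m, rfl⟩
      rw [Hc_zpow']
      exact ⟨(hξ _).mpr ⟨m, rfl⟩, rfl, rfl⟩
  have hcinj : Function.Injective fun n : ℤ => Hc ξ ^ n := by
    intro a b hab
    have h : Hc ((a : ℝ) * ξ) = Hc ((b : ℝ) * ξ) := by
      simpa only [Hc_zpow'] using hab
    have h2 : (a : ℝ) * ξ = (b : ℝ) * ξ := congrArg H3.z h
    exact_mod_cast mul_right_cancel₀ hξpos.ne' h2
  have hcD : Hc D = Hc ξ ^ m₀ := by rw [Hc_zpow', ← hm₀]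
  have hidx : Subgroup.relIndex (Subgroup.zpowers (Hc ξ ^ m₀)) (Subgroup.zpowers (Hc ξ))
      = m₀.natAbs := by
    set f := zpowersHom H3 (Hc ξ) with hf
    have h1 : Subgroup.map f ⊤ = Subgroup.zpowers (Hc ξ) := by
      rw [← MonoidHom.range_eq_map]; exact Subgroup.range_zpowersHom (Hc ξ)
    have h2 : Subgroup.comap f (Subgroup.zpowers (Hc ξ ^ m₀))
        = AddSubgroup.toSubgroup (AddSubgroup.zmultiples m₀) := by
      ext n
      simp only [Subgroup.mem_comap, Subgroup.mem_zpowers_iff, zpowersHom_apply]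
      constructor
      · rintro ⟨k, hk⟩
        rw [← zpow_mul] at hk
        have h3 : m₀ * k = Multiplicative.toAdd n := hcinj hk
        show Multiplicative.toAdd n ∈ AddSubgroup.zmultiples m₀
        exact ⟨k, by show k • m₀ = Multiplicative.toAdd n; rw [smul_eq_mul, mul_comm]; exact h3⟩
      · intro hn
        obtain ⟨k, hk⟩ := AddSubgroup.mem_zmultiples_iff.mp
          (show Multiplicative.toAdd n ∈ AddSubgroup.zmultiples m₀ from hn)
        refine ⟨k, ?_⟩
        show (Hc ξ ^ m₀) ^ k = Hc ξ ^ Multiplicative.toAdd n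
        rw [← zpow_mul, ← hk, smul_eq_mul, mul_comm]
    have h4 := Subgroup.relIndex_comap (H := Subgroup.zpowers (Hc ξ ^ m₀)) f ⊤
    rw [h1, Subgroup.relIndex_top_right, h2, AddSubgroup.index_toSubgroup,
      Int.index_zmultiples] at h4
    exact h4.symm
  rw [kIdx, hsub, hker, hcD, hidx, hdiv]
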